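/- Let B, R > 0, let ε > 0, and let L be a real number with L > 2R and L > 4R/ε². Then d(L − R) + d(εL + R) > S₀(L), where d is the Agmon distance and S₀ the tunneling action. -/
import Mathlib

/-- The Agmon distance function `d` of the paper, with parameters `B`, `R`. -/
noncomputable def agmonDist (B R r : ℝ) : ℝ :=
  B / 4 * (r ^ 2 - R ^ 2) - B * R ^ 2 / 2 * Real.log (r / R)

/-- The tunneling action `S₀` of the paper, with parameters `B`, `R`. -/
noncomputable def S0 (B R ℓ : ℝ) : ℝ :=
  B * ℓ / 4 * Real.sqrt (ℓ ^ 2 - 4 * R ^ 2)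
    - B * R ^ 2 * Real.log ((ℓ + Real.sqrt (ℓ ^ 2 - 4 * R ^ 2)) / (2 * R))

/-- if `ε > 0`, `L > 2R` and `L > 4R/ε²`, then
`d(L − R) + d(εL + R) > S₀(L)`. -/
theorem agmonDist_sum_gt_S0 (B R ε L : ℝ) (hB : 0 < B) (hR : 0 < R) (hε : 0 < ε)
    (hL : 2 * R < L) (hL' : 4 * R / ε ^ 2 < L) :
    S0 B R L < agmonDist B R (L - R) + agmonDist B R (ε * L + R) := by
  have hL0 : 0 < L := by linarith
  have hLR : 0 < L - R := by linarith
  have hεL : 0 < ε * L + R := by positivity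
  have hε2 : 4 * R * L < ε ^ 2 * L ^ 2 := by
    have h4 : 4 * R < ε ^ 2 * L := by
      have := (div_lt_iff₀ (by positivity : (0:ℝ) < ε ^ 2)).mp hL'
      nlinarith
    nlinarith
  have hs2 : (0:ℝ) ≤ L ^ 2 - 4 * R ^ 2 := by nlinarith
  set s := Real.sqrt (L ^ 2 - 4 * R ^ 2) with hs
  have hs0 : 0 ≤ s := Real.sqrt_nonneg _
  have hsL : s < L := by
    have h : s < Real.sqrt (L ^ 2) := Real.sqrt_lt_sqrt hs2 (by nlinarith)
    rwa [Real.sqrt_sq hL0.le] at h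
  have h1 : S0 B R L < B * L ^ 2 / 4 - B * R ^ 2 * Real.log (L / (2 * R)) := by
    unfold S0
    rw [← hs]
    have hlog : Real.log (L / (2 * R)) ≤ Real.log ((L + s) / (2 * R)) := by
      apply Real.log_le_log (by positivity)
      gcongr
      linarith
    have hmul : B * L / 4 * s < B * L / 4 * L :=
      mul_lt_mul_of_pos_left hsL (by positivity)
    have hmul2 : B * R ^ 2 * Real.log (L / (2 * R)) ≤
        B * R ^ 2 * Real.log ((L + s) / (2 * R)) :=
      mul_le_mul_of_nonneg_left hlog (by positivity)
    nlinarith [hmul, hmul2]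
  have hy0 : (0:ℝ) < 4 * (L - R) * (ε * L + R) / L ^ 2 := by positivity
  set y := 4 * (L - R) * (ε * L + R) / L ^ 2 with hy
  have hlogy : Real.log y = Real.log ((L - R) / R) + Real.log ((ε * L + R) / R)
      - 2 * Real.log (L / (2 * R)) := by
    have hLne : L ≠ 0 := ne_of_gt hL0
    have hRne : R ≠ 0 := ne_of_gt hR
    have hrew : y = ((L - R) / R) * ((ε * L + R) / R) / (L / (2 * R)) ^ 2 := by
      rw [hy]
      field_simp
      ring
    rw [hrew, Real.log_div (by positivity) (by positivity),
      Real.log_mul (by positivity) (by positivity), Real.log_pow]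
    push_cast
    ring
  have hy1 : y ≤ (1 + ε) ^ 2 := by
    rw [hy, div_le_iff₀ (by positivity)]
    nlinarith [sq_nonneg ((L - R) - (ε * L + R))]
  have hly : Real.log y ≤ 2 * ε := by
    have h2 : Real.log y = 2 * Real.log (Real.sqrt y) := by
      rw [Real.log_sqrt hy0.le]; ring
    have h3 : Real.log (Real.sqrt y) ≤ Real.sqrt y - 1 :=
      Real.log_le_sub_one_of_pos (Real.sqrt_pos.mpr hy0)
    have h4 : Real.sqrt y ≤ 1 + ε := by
      calc Real.sqrt y ≤ Real.sqrt ((1 + ε) ^ 2) := Real.sqrt_le_sqrt hy1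
        _ = 1 + ε := Real.sqrt_sq (by positivity)
    linarith
  have hprod : B * R ^ 2 / 2 * (Real.log ((L - R) / R) + Real.log ((ε * L + R) / R)
      - 2 * Real.log (L / (2 * R))) ≤ B * R ^ 2 * ε := by
    rw [← hlogy]
    have := mul_le_mul_of_nonneg_left hly (by positivity : (0:ℝ) ≤ B * R ^ 2 / 2)
    linarith
  have h2 : B * L ^ 2 / 4 - B * R ^ 2 * Real.log (L / (2 * R)) ≤
      agmonDist B R (L - R) + agmonDist B R (ε * L + R) := by
    unfold agmonDist
    have hA : B / 4 * (4 * R * L) < B / 4 * (ε ^ 2 * L ^ 2) :=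
      mul_lt_mul_of_pos_left hε2 (by positivity)
    have hB2 : B * ε * R * (2 * R) < B * ε * R * L :=
      mul_lt_mul_of_pos_left hL (by positivity)
    have hC : 0 < B * R * L := by positivity
    nlinarith [hprod, hA, hB2, hC]
  linarith
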